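/- arXiv:0903.3614 — 4 statements merged into one kernel-verified Lean document; each statement's English description precedes it below -/
import Mathlib

section
/- Let κ be an infinite regular cardinal and σ an infinite cardinal with σ^{ℵ₀} = σ. Suppose u is a finite-trace system for (κ, σ), i.e. u assigns to each function f : κ → σ and each ordinal α < κ a finite subset u(f,α) ⊆ σ such that whenever e : σ → σ and f₁, f₂ : κ → σ satisfy f₁ = e ∘ f₂, then u(f₁,α₁) ⊆ e '' u(f₂,α₂) (the image of u(f₂,α₂) under e) for all α₁, α₂ < κ. Assume moreover: (b) for every f : κ → σ, every α < κ and every i ∈ u(f,α), the set {β < κ : f(β) = i} is unbounded in κ; and (c) u(f,α) ≠ ∅ for at least one pair (f, α). Then there exists a uniform σ⁺-complete ultrafilter on κ. -/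
open Cardinal

/-!
Fix `α₀` and write `T f = u f α₀`; the trace condition says `T (e ∘ g) ⊆ e '' T g`, so `|T|`
can only drop under composition. Since `σ ^ ℵ₀ = σ`, countably many functions `κ → σ` are
coordinates of a single one, hence `|T f|` is bounded and some `f⋆` has a trace of maximal
size, containing some `i⋆`. Whenever `f⋆ = e ∘ h`, maximality forces `e` to map `T h`
bijectively onto `T f⋆`, so `T h` has a unique point `t` over `i⋆`; the fibres `h ⁻¹' {t}`
generate `D`. Pairing functions through `σ ≃ σ × σ` shows that these fibres are closed under
intersection and that every partition of `κ` into at most `σ` pieces has a piece in `D`: this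
gives an ultrafilter, and its `σ⁺`-completeness. Fibres over trace points are unbounded, so by
regularity of `κ` every member of `D` has size `κ`.
-/

/-- An ultrafilter `D` on `X` is `μ⁺`-complete: every family of at most `μ` members of `D`
has intersection in `D`. -/
def Ultrafilter.CompleteAtMost {X : Type} (D : Ultrafilter X) (μ : Cardinal.{0}) : Prop :=
  ∀ (ι : Type) (B : ι → Set X), #ι ≤ μ → (∀ i, B i ∈ D) → (⋂ i, B i) ∈ D

/-- An ultrafilter is uniform when all its members have full cardinality. -/
def Ultrafilter.Uniform {X : Type} (D : Ultrafilter X) : Prop :=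
  ∀ A ∈ D, #A = #X

theorem Filter.exists_preimage_singleton_mem_of_embedding {X S ι : Type*} {F : Filter X}
    [F.NeBot] (hF : ∀ j : X → S, ∃ s, j ⁻¹' {s} ∈ F) (c : ι ↪ S) (j : X → ι) :
    ∃ i, j ⁻¹' {i} ∈ F := by
  obtain ⟨s, hs⟩ := hF (c ∘ j)
  obtain ⟨x, rfl⟩ := F.nonempty_of_mem hs
  refine ⟨j x, ?_⟩
  convert hs using 1
  ext y
  simp [c.injective.eq_iff]

theorem Ultrafilter.completeAtMost_of_exists_preimage_singleton_mem {X : Type}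
    (D : Ultrafilter X) (μ : Cardinal.{0})
    (hD : ∀ (ι : Type) (j : X → ι), #ι ≤ μ → ∃ i, j ⁻¹' {i} ∈ D) : D.CompleteAtMost μ := by
  intro ι B hι hB
  by_contra hnot
  rcases isEmpty_or_nonempty ι with hι' | hι'
  · exact hnot (by rw [Set.iInter_of_empty]; exact Filter.univ_mem)
  let j : X → ι := fun x => Classical.epsilon fun i => x ∉ B i
  obtain ⟨i, hi⟩ := hD ι j hι
  obtain ⟨x, ⟨hxj, hxB⟩, hx⟩ := D.nonempty_of_mem
    (D.inter_mem (D.inter_mem hi (hB i)) (D.compl_mem_iff_notMem.2 hnot))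
  obtain ⟨i', hi'⟩ : ∃ i', x ∉ B i' := by simpa using hx
  have hxj' : j x = i := hxj
  exact Classical.epsilon_spec (p := fun i => x ∉ B i) ⟨i', hi'⟩ (show x ∈ B (j x) by rwa [hxj'])

theorem Ultrafilter.uniform_of_isCofinal {X : Type} [Preorder X] (D : Ultrafilter X)
    (hX : Order.cof X = #X) (hD : ∀ A ∈ D, IsCofinal A) : D.Uniform := fun A hA =>
  le_antisymm (mk_set_le A) (hX ▸ Order.cof_le (hD A hA))

structure FiniteTrace {X S : Type*} (T : (X → S) → Set S) : Prop where
  finite : ∀ f, (T f).Finite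
  subset_image_comp : ∀ e g, T (e ∘ g) ⊆ e '' T g
  subset_range : ∀ f, T f ⊆ Set.range f

def IsMaxTrace {X S : Type*} (T : (X → S) → Set S) (f : X → S) : Prop :=
  ∀ g, (T g).ncard ≤ (T f).ncard

section

variable {X S : Type*} {T : (X → S) → Set S}

namespace FiniteTrace

theorem ncard_comp_le (hT : FiniteTrace T) (e : S → S) (g : X → S) :
    (T (e ∘ g)).ncard ≤ (T g).ncard :=
  (Set.ncard_le_ncard (hT.subset_image_comp e g) ((hT.finite g).image e)).trans
    (Set.ncard_image_le (hT.finite g))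

theorem bddAbove_range_ncard [Nonempty S] (hT : FiniteTrace T) (c : (ℕ → S) ↪ S) :
    BddAbove (Set.range fun f => (T f).ncard) := by
  by_contra hunb
  have hlarge : ∀ n : ℕ, ∃ f, n < (T f).ncard := by
    simpa [bddAbove_def] using hunb
  choose F hF using hlarge
  let H : X → S := fun x => c fun k => F k x
  have hcoord : ∀ k, F k = (fun s => Function.invFun c s k) ∘ H := fun k => by
    funext x
    simp [H, Function.leftInverse_invFun c.injective _]
  have hle := hT.ncard_comp_le (fun s => Function.invFun c s (T H).ncard) H
  rw [← hcoord] at hle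
  exact (hF _).not_ge hle

theorem exists_isMaxTrace [Nonempty S] (hT : FiniteTrace T) (c : (ℕ → S) ↪ S) :
    ∃ f, IsMaxTrace T f := by
  have hbdd := hT.bddAbove_range_ncard c
  obtain ⟨f, hf⟩ := Nat.sSup_mem (Set.range_nonempty fun f : X → S => (T f).ncard) hbdd
  refine ⟨f, fun g => ?_⟩
  rw [show (T f).ncard = _ from hf]
  exact le_csSup hbdd ⟨g, rfl⟩

end FiniteTrace

namespace IsMaxTrace

variable {f g h : X → S} {e d : S → S} {i : S}

theorem nonempty (hf : IsMaxTrace T f) (hT : FiniteTrace T) (hg : (T g).Nonempty) :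
    (T f).Nonempty := by
  rw [← Set.ncard_pos (hT.finite _)] at hg ⊢
  exact hg.trans_le (hf g)

theorem ncard_image_eq (hf : IsMaxTrace T f) (hT : FiniteTrace T) (he : f = e ∘ h) :
    (e '' T h).ncard = (T f).ncard ∧ (T h).ncard = (T f).ncard := by
  subst he
  have h₁ := Set.ncard_le_ncard (hT.subset_image_comp e h) ((hT.finite h).image e)
  have h₂ := Set.ncard_image_le (f := e) (hT.finite h)
  have h₃ := hf h
  omega

theorem image_eq (hf : IsMaxTrace T f) (hT : FiniteTrace T) (he : f = e ∘ h) :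
    e '' T h = T f := by
  subst he
  exact (Set.eq_of_subset_of_ncard_le (hT.subset_image_comp e h)
    (hf.ncard_image_eq hT rfl).1.le ((hT.finite h).image e)).symm

theorem injOn (hf : IsMaxTrace T f) (hT : FiniteTrace T) (he : f = e ∘ h) :
    Set.InjOn e (T h) := by
  obtain ⟨h₁, h₂⟩ := hf.ncard_image_eq hT he
  exact Set.injOn_of_ncard_image_eq (h₁.trans h₂.symm) (hT.finite h)

theorem of_comp (hf : IsMaxTrace T f) (hT : FiniteTrace T) (he : f = e ∘ h) :
    IsMaxTrace T h := fun g => (hf g).trans (hf.ncard_image_eq hT he).2.ge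

theorem exists_mem_apply_eq (hf : IsMaxTrace T f) (hT : FiniteTrace T) (he : f = e ∘ h)
    (hi : i ∈ T f) : ∃ t ∈ T h, e t = i := by
  rwa [← hf.image_eq hT he] at hi

theorem preimage_singleton_subset (hf : IsMaxTrace T f) (hT : FiniteTrace T)
    (he : f = e ∘ g) (hd : g = d ∘ h) {t t' : S} (ht : t ∈ T h) (ht' : t' ∈ T g)
    (heq : e (d t) = e t') : h ⁻¹' {t} ⊆ g ⁻¹' {t'} := by
  have hdt : d t ∈ T g := (hf.of_comp hT he).image_eq hT hd ▸ Set.mem_image_of_mem d ht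
  have hdt' : d t = t' := hf.injOn hT he hdt ht' heq
  intro x hx
  simp_all

end IsMaxTrace

/-- When `f` has maximal trace, `t` is the unique point of `T h` over `i` (`IsMaxTrace.injOn`). -/
def traceSets (T : (X → S) → Set S) (f : X → S) (i : S) : Set (Set X) :=
  {A | ∃ h e t, f = e ∘ h ∧ t ∈ T h ∧ e t = i ∧ h ⁻¹' {t} ⊆ A}

variable {f : X → S} {i : S}

theorem nonempty_of_mem_traceSets (hT : FiniteTrace T) {A : Set X}
    (hA : A ∈ traceSets T f i) : A.Nonempty := by
  obtain ⟨h, -, t, -, ht, -, hA⟩ := hA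
  obtain ⟨x, rfl⟩ := hT.subset_range h ht
  exact ⟨x, hA rfl⟩

theorem isCofinal_of_mem_traceSets [Preorder X]
    (hcof : ∀ f, ∀ i ∈ T f, IsCofinal (f ⁻¹' {i})) {A : Set X} (hA : A ∈ traceSets T f i) :
    IsCofinal A := by
  obtain ⟨h, -, t, -, ht, -, hA⟩ := hA
  exact (hcof h t ht).mono hA

namespace IsMaxTrace

theorem inter_mem_traceSets (hf : IsMaxTrace T f) (hT : FiniteTrace T) (p : S ≃ S × S)
    (hi : i ∈ T f) {A B : Set X} (hA : A ∈ traceSets T f i) (hB : B ∈ traceSets T f i) :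
    A ∩ B ∈ traceSets T f i := by
  obtain ⟨h₁, e₁, t₁, he₁, ht₁, hi₁, hA⟩ := hA
  obtain ⟨h₂, e₂, t₂, he₂, ht₂, hi₂, hB⟩ := hB
  let h : X → S := fun x => p.symm (h₁ x, h₂ x)
  have hd₁ : h₁ = (fun s => (p s).1) ∘ h := by funext x; simp [h]
  have hd₂ : h₂ = (fun s => (p s).2) ∘ h := by funext x; simp [h]
  have he : f = (e₁ ∘ fun s => (p s).1) ∘ h := by rw [he₁, hd₁]; rfl
  obtain ⟨t, ht, hit⟩ := hf.exists_mem_apply_eq hT he hi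
  obtain ⟨x, rfl⟩ := hT.subset_range h ht
  have hit₂ : e₂ (p (h x)).2 = i := by
    simp only [h, Function.comp_apply, Equiv.apply_symm_apply] at hit ⊢
    exact (congrFun he₂ x).symm.trans ((congrFun he₁ x).trans hit)
  refine ⟨h, _, h x, he, ht, hit, fun y hy => ⟨hA ?_, hB ?_⟩⟩
  · exact hf.preimage_singleton_subset hT he₁ hd₁ ht ht₁ (hit.trans hi₁.symm) hy
  · exact hf.preimage_singleton_subset hT he₂ hd₂ ht ht₂ (hit₂.trans hi₂.symm) hy

theorem exists_preimage_singleton_mem_traceSets (hf : IsMaxTrace T f) (hT : FiniteTrace T)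
    (p : S ≃ S × S) (hi : i ∈ T f) (j : X → S) : ∃ s, j ⁻¹' {s} ∈ traceSets T f i := by
  let g : X → S := fun x => p.symm (f x, j x)
  have hg : f = (fun s => (p s).1) ∘ g := by funext x; simp [g]
  obtain ⟨t, ht, hit⟩ := hf.exists_mem_apply_eq hT hg hi
  refine ⟨(p t).2, g, _, t, hg, ht, hit, fun x hx => ?_⟩
  simp only [Set.mem_preimage, Set.mem_singleton_iff] at hx ⊢
  simp [← hx, g]

end IsMaxTrace

def traceFilter (hT : FiniteTrace T) (p : S ≃ S × S) (hf : IsMaxTrace T f) (hi : i ∈ T f) :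
    Filter X where
  sets := traceSets T f i
  univ_sets := ⟨f, id, i, rfl, hi, rfl, Set.subset_univ _⟩
  sets_of_superset := fun ⟨h, e, t, he, ht, hit, hA⟩ hAB => ⟨h, e, t, he, ht, hit, hA.trans hAB⟩
  inter_sets := hf.inter_mem_traceSets hT p hi

theorem traceFilter_neBot (hT : FiniteTrace T) (p : S ≃ S × S) (hf : IsMaxTrace T f)
    (hi : i ∈ T f) : (traceFilter hT p hf hi).NeBot :=
  Filter.forall_mem_nonempty_iff_neBot.1 fun _ => nonempty_of_mem_traceSets hT

theorem mem_or_compl_mem_traceFilter [Nontrivial S] (hT : FiniteTrace T) (p : S ≃ S × S)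
    (hf : IsMaxTrace T f) (hi : i ∈ T f) (A : Set X) :
    A ∈ traceFilter hT p hf hi ∨ Aᶜ ∈ traceFilter hT p hf hi := by
  classical
  obtain ⟨s₀, s₁, hs₀₁⟩ := exists_pair_ne S
  obtain ⟨s, hs⟩ := hf.exists_preimage_singleton_mem_traceSets hT p hi
    fun x => if x ∈ A then s₀ else s₁
  replace hs : _ ∈ traceFilter hT p hf hi := hs
  by_cases hs₀ : s = s₀
  · refine .inl (Filter.mem_of_superset hs fun x hx => ?_)
    by_contra hxA
    simp [hxA, hs₀] at hx
    exact hs₀₁ hx.symm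
  · refine .inr (Filter.mem_of_superset hs fun x hx hxA => hs₀ ?_)
    simpa [hxA] using hx.symm

def traceUltrafilter [Nontrivial S] (hT : FiniteTrace T) (p : S ≃ S × S)
    (hf : IsMaxTrace T f) (hi : i ∈ T f) : Ultrafilter X :=
  haveI := traceFilter_neBot hT p hf hi
  Ultrafilter.ofComplNotMemIff (traceFilter hT p hf hi) fun A =>
    ⟨fun hA => (mem_or_compl_mem_traceFilter hT p hf hi A).resolve_right hA, Filter.compl_notMem⟩

end

theorem traceUltrafilter_completeAtMost {X S : Type} {T : (X → S) → Set S} {f : X → S} {i : S}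
    [Nontrivial S] (hT : FiniteTrace T) (p : S ≃ S × S) (hf : IsMaxTrace T f) (hi : i ∈ T f) :
    (traceUltrafilter hT p hf hi).CompleteAtMost #S :=
  (traceUltrafilter hT p hf hi).completeAtMost_of_exists_preimage_singleton_mem _
    fun _ j hι => Filter.exists_preimage_singleton_mem_of_embedding
      (hf.exists_preimage_singleton_mem_traceSets hT p hi) (Cardinal.le_def _ _ |>.1 hι).some j

theorem stmt_2_general (κ σ : Cardinal.{0}) (hκreg : κ.IsRegular)
    (hσinf : ℵ₀ ≤ σ) (hσ : σ ^ ℵ₀ = σ)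
    (u : (κ.ord.ToType → σ.ord.ToType) → κ.ord.ToType → Set σ.ord.ToType)
    (hufin : ∀ f α, (u f α).Finite)
    (hutrace : ∀ (e : σ.ord.ToType → σ.ord.ToType)
        (f₁ f₂ : κ.ord.ToType → σ.ord.ToType), f₁ = e ∘ f₂ →
        ∀ α₁ α₂, u f₁ α₁ ⊆ e '' u f₂ α₂)
    (hunb : ∀ f α i, i ∈ u f α → ∀ γ : κ.ord.ToType, ∃ β : κ.ord.ToType,
        γ ≤ β ∧ f β = i)
    (hne : ∃ f α, (u f α).Nonempty) :
    ∃ D : Ultrafilter κ.ord.ToType, D.CompleteAtMost σ ∧ D.Uniform := by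
  obtain ⟨α₀⟩ : Nonempty κ.ord.ToType := Ordinal.nonempty_toType_iff.2 hκreg.ord_pos.ne'
  have hcof : ∀ f, ∀ i ∈ u f α₀, IsCofinal (f ⁻¹' {i}) := fun f i hi γ =>
    (hunb f α₀ i hi γ).imp fun _ ⟨hγ, hβ⟩ => ⟨hβ, hγ⟩
  have hT : FiniteTrace (u · α₀) :=
    ⟨(hufin · α₀), fun e g => hutrace e _ g rfl α₀ α₀,
      fun f i hi => (hcof f i hi α₀).imp fun _ hβ => hβ.1⟩
  have hS : #σ.ord.ToType = σ := mk_ord_toType σ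
  have hSinf : ℵ₀ ≤ #σ.ord.ToType := hσinf.trans_eq hS.symm
  have : Infinite σ.ord.ToType := infinite_iff.2 hSinf
  obtain ⟨c⟩ : Nonempty ((ℕ → σ.ord.ToType) ↪ σ.ord.ToType) := by
    rw [← le_def, ← power_def, mk_nat, hS, hσ]
  obtain ⟨p⟩ : Nonempty (σ.ord.ToType ≃ σ.ord.ToType × σ.ord.ToType) :=
    Cardinal.eq.1 (by rw [mk_prod, lift_id, mul_eq_self hSinf])
  obtain ⟨f, hf⟩ := hT.exists_isMaxTrace c
  obtain ⟨f₁, α₁, hf₁⟩ := hne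
  obtain ⟨i, hi⟩ := hf.nonempty hT (g := f₁)
    (by simpa using hf₁.mono (hutrace id f₁ f₁ rfl α₁ α₀))
  have hcomplete := traceUltrafilter_completeAtMost hT p hf hi
  rw [hS] at hcomplete
  refine ⟨traceUltrafilter hT p hf hi, hcomplete, ?_⟩
  refine Ultrafilter.uniform_of_isCofinal _ ?_ fun A hA => isCofinal_of_mem_traceSets hcof hA
  rw [Ordinal.cof_toType, hκreg.cof_ord, mk_ord_toType]

/-- Let `κ` be an infinite regular cardinal, `σ` infinite with `σ ^ ℵ₀ = σ`.
If `u` is a finite-trace system for `(κ, σ)` (each `u f α` is a finite subset of `σ`, and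
`f₁ = e ∘ f₂` implies `u f₁ α₁ ⊆ e '' u f₂ α₂`), every `i ∈ u f α` is attained by `f`
unboundedly often, and some `u f α` is nonempty, then there is a uniform `σ⁺`-complete
ultrafilter on `κ`. -/
theorem stmt_2 (κ σ : Cardinal.{0}) (hκreg : κ.IsRegular) (hκinf : ℵ₀ ≤ κ)
    (hσinf : ℵ₀ ≤ σ) (hσ : σ ^ ℵ₀ = σ)
    (u : (κ.ord.ToType → σ.ord.ToType) → κ.ord.ToType → Set σ.ord.ToType)
    (hufin : ∀ f α, (u f α).Finite)
    (hutrace : ∀ (e : σ.ord.ToType → σ.ord.ToType)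
        (f₁ f₂ : κ.ord.ToType → σ.ord.ToType), f₁ = e ∘ f₂ →
        ∀ α₁ α₂, u f₁ α₁ ⊆ e '' u f₂ α₂)
    (hunb : ∀ f α i, i ∈ u f α → ∀ γ : κ.ord.ToType, ∃ β : κ.ord.ToType,
        γ ≤ β ∧ f β = i)
    (hne : ∃ f α, (u f α).Nonempty) :
    ∃ D : Ultrafilter κ.ord.ToType, D.CompleteAtMost σ ∧ D.Uniform :=
  stmt_2_general κ σ hκreg hσinf hσ u hufin hutrace hunb hne
end

section
/- Let κ be an infinite cardinal and σ an infinite cardinal with σ^{ℵ₀} = σ. Suppose u is a finite-trace system for (κ, σ), i.e. u assigns to each function f : κ → σ and each ordinal α < κ a finite subset u(f,α) ⊆ σ such that whenever e : σ → σ and f₁, f₂ : κ → σ satisfy f₁ = e ∘ f₂, then u(f₁,α₁) ⊆ e '' u(f₂,α₂) (the image of u(f₂,α₂) under e) for all α₁, α₂ < κ. Then there exist f⁎ : κ → σ and α⁎ < κ such that: (i) for every f : κ → σ and α < κ, if f⁎ = e ∘ f for some e : σ → σ, then the finite sets u(f,α) and u(f⁎,α⁎) have the same number of elements; and (ii) moreover,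 for any such f, α and any e : σ → σ with f⁎ = e ∘ f, the function e maps u(f,α) bijectively onto u(f⁎,α⁎). -/
open Cardinal

/-!
Since `σ ^ ℵ₀ = σ`, countably many functions `fₙ : κ → σ` can be coded into a single
`F : κ → σ` with every `fₙ` of the form `eₙ ∘ F`. The trace inclusions then bound every
`|u fₙ αₙ|` by `|u F α|`, so trace sizes are bounded and some `u f⁎ α⁎` has maximal size. If
`f⁎ = e ∘ f`, then `u f⁎ α⁎ ⊆ e '' u f α` while `|u f α| ≤ |u f⁎ α⁎|`, which forces `e` to map
`u f α` bijectively onto `u f⁎ α⁎`.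
-/

theorem Set.bijOn_of_subset_image_of_ncard_le {α β : Type*} {s : Set α} {t : Set β}
    {e : α → β} (hs : s.Finite) (hts : t ⊆ e '' s) (hst : s.ncard ≤ t.ncard) :
    Set.BijOn e s t := by
  have himage_le : (e '' s).ncard ≤ s.ncard := Set.ncard_image_le hs
  have himage : t = e '' s := Set.eq_of_subset_of_ncard_le hts (by omega) (hs.image e)
  subst himage
  exact ⟨Set.mapsTo_image e s, Set.injOn_of_ncard_image_eq (by omega) hs,
    Set.surjOn_image e s⟩

structure IsFiniteTraceSystem {K T : Type*} (u : (K → T) → K → Set T) : Prop where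
  finite : ∀ f α, (u f α).Finite
  subset_image : ∀ (e : T → T) (f₁ f₂ : K → T), f₁ = e ∘ f₂ → ∀ α₁ α₂, u f₁ α₁ ⊆ e '' u f₂ α₂

namespace IsFiniteTraceSystem

variable {K T : Type*} {u : (K → T) → K → Set T}

theorem ncard_le_of_eq_comp (hu : IsFiniteTraceSystem u) {e : T → T} {f₁ f₂ : K → T}
    (h : f₁ = e ∘ f₂) (α₁ α₂ : K) : (u f₁ α₁).ncard ≤ (u f₂ α₂).ncard :=
  calc (u f₁ α₁).ncard ≤ (e '' u f₂ α₂).ncard :=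
        Set.ncard_le_ncard (hu.subset_image e f₁ f₂ h α₁ α₂) ((hu.finite _ _).image _)
    _ ≤ (u f₂ α₂).ncard := Set.ncard_image_le (hu.finite _ _)

theorem bddAbove_range_ncard [Nonempty K] (hu : IsFiniteTraceSystem u) (b : (ℕ → T) ≃ T) :
    BddAbove (Set.range fun p : (K → T) × K => (u p.1 p.2).ncard) := by
  by_contra hunbdd
  have hlarge : ∀ n : ℕ, ∃ p : (K → T) × K, n < (u p.1 p.2).ncard := by
    simpa [not_bddAbove_iff] using hunbdd
  choose p hp using hlarge
  let F : K → T := fun x => b fun n => (p n).1 x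
  have hF : ∀ n, (p n).1 = (fun t => b.symm t n) ∘ F := fun n => by
    funext x
    simp [F]
  let α : K := Classical.arbitrary K
  exact lt_irrefl _ <| (hp (u F α).ncard).trans_le (hu.ncard_le_of_eq_comp (hF _) _ α)

theorem exists_max_ncard [Nonempty K] [Nonempty T] (hu : IsFiniteTraceSystem u)
    (b : (ℕ → T) ≃ T) :
    ∃ (fs : K → T) (αs : K), ∀ f α, (u f α).ncard ≤ (u fs αs).ncard := by
  obtain ⟨_, ⟨⟨fs, αs⟩, rfl⟩, hmax⟩ :=
    (hu.bddAbove_range_ncard b).exists_isGreatest_of_nonempty (Set.range_nonempty _)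
  exact ⟨fs, αs, fun f α => hmax ⟨(f, α), rfl⟩⟩

theorem bijOn_of_max_ncard (hu : IsFiniteTraceSystem u) {fs : K → T} {αs : K}
    (hmax : ∀ f α, (u f α).ncard ≤ (u fs αs).ncard) {f : K → T} {e : T → T}
    (he : fs = e ∘ f) (α : K) : Set.BijOn e (u f α) (u fs αs) :=
  Set.bijOn_of_subset_image_of_ncard_le (hu.finite f α) (hu.subset_image e fs f he αs α)
    (hmax f α)

end IsFiniteTraceSystem

/-- Let `κ` be infinite and `σ` infinite with `σ ^ ℵ₀ = σ`. If `u` is a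
finite-trace system for `(κ, σ)`, then there are `f⁎ : κ → σ` and `α⁎ < κ` such that whenever
`f⁎ = e ∘ f`, the finite sets `u f α` and `u f⁎ α⁎` have the same number of elements, and
moreover any such `e` maps `u f α` bijectively onto `u f⁎ α⁎`. -/
theorem stmt_3 (κ σ : Cardinal.{0}) (hκinf : ℵ₀ ≤ κ) (hσinf : ℵ₀ ≤ σ)
    (hσ : σ ^ ℵ₀ = σ)
    (u : (κ.ord.ToType → σ.ord.ToType) → κ.ord.ToType → Set σ.ord.ToType)
    (hufin : ∀ f α, (u f α).Finite)
    (hutrace : ∀ (e : σ.ord.ToType → σ.ord.ToType)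
        (f₁ f₂ : κ.ord.ToType → σ.ord.ToType), f₁ = e ∘ f₂ →
        ∀ α₁ α₂, u f₁ α₁ ⊆ e '' u f₂ α₂) :
    ∃ (fs : κ.ord.ToType → σ.ord.ToType) (αs : κ.ord.ToType),
      (∀ (f : κ.ord.ToType → σ.ord.ToType) (α : κ.ord.ToType)
          (e : σ.ord.ToType → σ.ord.ToType), fs = e ∘ f →
          (u f α).ncard = (u fs αs).ncard) ∧
      (∀ (f : κ.ord.ToType → σ.ord.ToType) (α : κ.ord.ToType)
          (e : σ.ord.ToType → σ.ord.ToType), fs = e ∘ f →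
          Set.BijOn e (u f α) (u fs αs)) := by
  have hu : IsFiniteTraceSystem u := ⟨hufin, hutrace⟩
  have : Nonempty κ.ord.ToType := by
    rw [← Cardinal.mk_ne_zero_iff, Cardinal.mk_ord_toType]
    exact (aleph0_pos.trans_le hκinf).ne'
  have : Nonempty σ.ord.ToType := by
    rw [← Cardinal.mk_ne_zero_iff, Cardinal.mk_ord_toType]
    exact (aleph0_pos.trans_le hσinf).ne'
  obtain ⟨b⟩ : Nonempty ((ℕ → σ.ord.ToType) ≃ σ.ord.ToType) := by
    rw [← Cardinal.eq, ← Cardinal.power_def, Cardinal.mk_ord_toType, Cardinal.mk_denumerable, hσ]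
  obtain ⟨fs, αs, hmax⟩ := hu.exists_max_ncard b
  have hbij := fun f α e (he : fs = e ∘ f) => hu.bijOn_of_max_ncard hmax he α
  exact ⟨fs, αs, fun f α e he => (hbij f α e he).ncard_eq, hbij⟩
end

section
/- Let P be a nonempty preorder in which every monotone sequence p : ℕ → P (i.e. p(n) ≤ p(n+1) for all n) has an upper bound, and let n : P → ℕ be monotone (p ≤ q implies n(p) ≤ n(q)). Then there exists p⁎ ∈ P such that n(q) = n(p⁎) for every q ∈ P with p⁎ ≤ q. -/
/-!
If the conclusion failed, every `p` would have some `g p ≥ p` with `n (g p) > n p`. The orbit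
`g^[k] p₀` is then a monotone sequence, so it has an upper bound `b`; but `n` is strictly increasing
along the orbit, so `k ≤ n (g^[k] p₀) ≤ n b` for every `k`, which is absurd.
-/

section
variable {P : Type*} [Preorder P]

lemma exists_forall_iterate_le_of_le_self
    (hub : ∀ p : ℕ → P, (∀ k, p k ≤ p (k + 1)) → ∃ b, ∀ k, p k ≤ b)
    {g : P → P} (hg : ∀ x, x ≤ g x) (x : P) : ∃ b, ∀ k, g^[k] x ≤ b :=
  hub _ fun k => by rw [Function.iterate_succ_apply']; exact hg _

lemma not_strictMono_comp_of_forall_le {n : P → ℕ} (hn : Monotone n) {p : ℕ → P} {b : P}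
    (hb : ∀ k, p k ≤ b) : ¬StrictMono (n ∘ p) := fun hmono =>
  (n b).not_succ_le_self ((hmono.id_le (n b + 1)).trans (hn (hb _)))

end

/-- In a nonempty preorder where every monotone `ℕ`-indexed sequence has an
upper bound, every monotone function `n : P → ℕ` is eventually constant above some point. -/
theorem stmt_6 {P : Type*} [Preorder P] [Nonempty P]
    (hub : ∀ p : ℕ → P, (∀ k, p k ≤ p (k + 1)) → ∃ b, ∀ k, p k ≤ b)
    (n : P → ℕ) (hn : Monotone n) :
    ∃ p : P, ∀ q : P, p ≤ q → n q = n p := by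
  by_contra! h
  choose g hg hgn using h
  obtain ⟨x⟩ := ‹Nonempty P›
  obtain ⟨b, hb⟩ := exists_forall_iterate_le_of_le_self hub hg x
  refine not_strictMono_comp_of_forall_le hn hb (strictMono_nat_of_lt_succ fun k => ?_)
  simp only [Function.comp_apply, Function.iterate_succ_apply']
  exact (hn (hg _)).lt_of_ne (hgn _).symm
end

section
/- Let D be an ultrafilter on a set X and κ an infinite cardinal. Suppose D is closed under intersections of families of fewer than κ of its members, while there exists some family of κ many members of D whose intersection does not belong to D. Then there exists an ultrafilter E on κ which is closed under intersections of families of fewer than κ of its members and is uniform, i.e. every member of E has cardinality κ. -/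
/-!
Given members `B i` of `D` (for `i < κ`) whose intersection is not in `D`, map each point
`x ∉ ⋂ i, B i` to an index `f x` with `x ∉ B (f x)`. The image `E = f D` is again `κ`-complete
and contains no singleton `{i}`: otherwise `f ⁻¹' {i} ∩ (⋂ j, B j)ᶜ ∈ D` would be disjoint
from `B i ∈ D`. A `κ`-complete ultrafilter without singletons contains no set `A` with
`#A < κ`, since `Aᶜ` is then the intersection of fewer than `κ` sets `{a}ᶜ`, all in `E`.
-/

open Cardinal Filter Set

universe u

variable {α I : Type u} {c : Cardinal.{u}}

theorem Filter.CardinalInterFilter.of_iInter_mem {l : Filter α}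
    (h : ∀ (ι : Type u) (s : ι → Set α), #ι < c → (∀ i, s i ∈ l) → (⋂ i, s i) ∈ l) :
    CardinalInterFilter l c :=
  ⟨fun S hS hmem => sInter_eq_iInter ▸ h S _ hS fun s => hmem s s.2⟩

namespace Ultrafilter

theorem le_mk_of_mem_of_forall_singleton_notMem (E : Ultrafilter α)
    [CardinalInterFilter (E : Filter α) c] (hfree : ∀ a, {a} ∉ E) {A : Set α} (hA : A ∈ E) :
    c ≤ #A := by
  by_contra! hlt
  have hcompl : Aᶜ = ⋂ a ∈ A, ({a}ᶜ : Set α) := by rw [← compl_iUnion₂, biUnion_of_singleton]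
  have hsingleton_compl : ∀ a ∈ A, ({a}ᶜ : Set α) ∈ E :=
    fun a _ => E.compl_mem_iff_notMem.2 (hfree a)
  exact E.compl_notMem_iff.2 hA (hcompl ▸ (cardinal_bInter_mem hlt).2 hsingleton_compl)

theorem singleton_notMem_map {X : Type*} {D : Ultrafilter X} {B : I → Set X}
    (hB : ∀ i, B i ∈ D) (hBinter : (⋂ i, B i) ∉ D) {f : X → I}
    (hf : ∀ x ∉ ⋂ i, B i, x ∉ B (f x)) (i : I) : {i} ∉ map f D := by
  intro hi
  have hfiber : f ⁻¹' {i} ∩ (⋂ j, B j)ᶜ ⊆ (B i)ᶜ := by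
    rintro x ⟨rfl, hx⟩
    exact hf x hx
  have hcompl : (B i)ᶜ ∈ D :=
    mem_of_superset (inter_mem (mem_map.1 hi) (D.compl_mem_iff_notMem.2 hBinter)) hfiber
  exact D.compl_mem_iff_notMem.1 hcompl (hB i)

theorem exists_cardinalInterFilter_le_mk_of_iInter_notMem {X : Type u} (D : Ultrafilter X)
    [CardinalInterFilter (D : Filter X) c] {B : I → Set X} (hB : ∀ i, B i ∈ D)
    (hBinter : (⋂ i, B i) ∉ D) :
    ∃ E : Ultrafilter I, CardinalInterFilter (E : Filter I) c ∧ ∀ A ∈ E, c ≤ #A := by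
  have hI : Nonempty I := by
    by_contra! hI
    exact hBinter (by rw [iInter_of_empty]; exact univ_mem)
  have hescape : ∀ x, ∃ i, x ∉ ⋂ j, B j → x ∉ B i := fun x => by
    by_cases hx : x ∈ ⋂ j, B j
    · exact ⟨Classical.arbitrary I, fun h => (h hx).elim⟩
    · simp only [mem_iInter, not_forall] at hx
      obtain ⟨i, hi⟩ := hx
      exact ⟨i, fun _ => hi⟩
  choose f hf using hescape
  have hcomplete : CardinalInterFilter (map f D : Filter I) c := by
    rw [coe_map]
    infer_instance
  exact ⟨map f D, hcomplete, fun A hA =>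
    (map f D).le_mk_of_mem_of_forall_singleton_notMem (singleton_notMem_map hB hBinter hf) hA⟩

end Ultrafilter

theorem stmt_8_general (κ : Cardinal.{0}) (X : Type) (D : Ultrafilter X)
    (hcomp : ∀ (ι : Type) (B : ι → Set X), #ι < κ → (∀ i, B i ∈ D) → (⋂ i, B i) ∈ D)
    (hbad : ∃ B : κ.ord.ToType → Set X, (∀ i, B i ∈ D) ∧ (⋂ i, B i) ∉ D) :
    ∃ E : Ultrafilter κ.ord.ToType,
      (∀ (ι : Type) (B : ι → Set κ.ord.ToType), #ι < κ → (∀ i, B i ∈ E) →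
        (⋂ i, B i) ∈ E) ∧
      (∀ A ∈ E, #A = κ) := by
  obtain ⟨B, hB, hBinter⟩ := hbad
  have : CardinalInterFilter (D : Filter X) κ := .of_iInter_mem hcomp
  obtain ⟨E, hEcomplete, hEuniform⟩ :=
    Ultrafilter.exists_cardinalInterFilter_le_mk_of_iInter_notMem (c := κ) D hB hBinter
  refine ⟨E, fun ι A hι hA => (cardinal_iInter_mem hι).2 hA, fun A hA => ?_⟩
  exact le_antisymm ((mk_set_le A).trans_eq (by rw [mk_toType, card_ord])) (hEuniform A hA)

/-- If an ultrafilter `D` on `X` is closed under intersections of families of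
fewer than `κ` of its members, but some family of `κ` many members of `D` has intersection
not in `D`, then there is a uniform ultrafilter on `κ` closed under intersections of families
of fewer than `κ` of its members. -/
theorem stmt_8 (κ : Cardinal.{0}) (hκinf : ℵ₀ ≤ κ) (X : Type) (D : Ultrafilter X)
    (hcomp : ∀ (ι : Type) (B : ι → Set X), #ι < κ → (∀ i, B i ∈ D) → (⋂ i, B i) ∈ D)
    (hbad : ∃ B : κ.ord.ToType → Set X, (∀ i, B i ∈ D) ∧ (⋂ i, B i) ∉ D) :
    ∃ E : Ultrafilter κ.ord.ToType,
      (∀ (ι : Type) (B : ι → Set κ.ord.ToType), #ι < κ → (∀ i, B i ∈ E) →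
        (⋂ i, B i) ∈ E) ∧
      (∀ A ∈ E, #A = κ) :=
  stmt_8_general κ X D hcomp hbad
end
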